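/- Consider a partitioned Runge–Kutta method with coefficients (a_{ij}, b_i) and (â_{ij}, b̂_i) applied to a canonical Hamiltonian system q̇ = ∇_p H, ṗ = −∇_q H with separable Hamiltonian H(q,p) = T(p) + V(q), with T, V of class C². If the compatibility condition b_i â_{ij} + b̂_j a_{ji} = b_i b̂_j holds for all i,j, then for sufficiently small h the one-step map (q_0,p_0) ↦ (q_1,p_1) is symplectic. -/

import Mathlib

/-- The canonical symplectic form on `ℝ^{2d} = (Fin d → ℝ) × (Fin d → ℝ)`. -/
noncomputable def canonicalForm (d : ℕ)
    (u v : (Fin d → ℝ) × (Fin d → ℝ)) : ℝ :=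
  ∑ i, (u.1 i * v.2 i - u.2 i * v.1 i)

/-- The gradient of a function `ℝ^d → ℝ`. -/
noncomputable def gradVec (d : ℕ) (V : (Fin d → ℝ) → ℝ) (q : Fin d → ℝ) : Fin d → ℝ :=
  fun i => fderiv ℝ V q (Pi.single i 1)

/-!
Differentiating the stage equations shows that the derivative of the one-step map is the same
partitioned Runge–Kutta step applied to the variational equations, with stage slopes
`kᵢ = ∇²T(Pᵢ) δPᵢ` and `ℓᵢ = ∇²V(Qᵢ) δQᵢ`. For any bilinear pairing `B`, expanding
`B(q₁, p₁)` and cancelling the `h²` terms with the compatibility condition gives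
`B(q₁, p₁) = B(q₀, p₀) + h ∑ᵢ (bᵢ B(kᵢ, Pᵢ) - b̂ᵢ B(Qᵢ, ℓᵢ))`. In the symplectic form the stage
sums of the two tangent vectors then cancel term by term, because Hessians are symmetric.
-/

open Finset

theorem LinearMap.apply_partitionedRK_step {R M N ι : Type*} [CommRing R] [AddCommGroup M]
    [Module R M] [AddCommGroup N] [Module R N] [Fintype ι] (B : M →ₗ[R] N →ₗ[R] R)
    {a ah : ι → ι → R} {b bh : ι → R} (hcompat : ∀ i j, b i * ah i j + bh j * a j i = b i * bh j)
    (h : R) (q : M) (p : N) (k Q : ι → M) (l P : ι → N)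
    (hQ : ∀ i, Q i = q + h • ∑ j, a i j • k j) (hP : ∀ i, P i = p - h • ∑ j, ah i j • l j) :
    B (q + h • ∑ i, b i • k i) (p - h • ∑ i, bh i • l i) =
      B q p + h * ∑ i, (b i * B (k i) (P i) - bh i * B (Q i) (l i)) := by
  have hkl : B (∑ i, b i • k i) (∑ j, bh j • l j) = ∑ i, ∑ j, b i * bh j * B (k i) (l j) := by
    simp only [map_sum, map_smul, LinearMap.sum_apply, LinearMap.smul_apply, smul_eq_mul, mul_sum]
    rw [sum_comm]
    exact sum_congr rfl fun i _ => sum_congr rfl fun j _ => by ring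
  have hkP : ∑ i, b i * B (k i) (P i) =
      B (∑ i, b i • k i) p - h * ∑ i, ∑ j, b i * ah i j * B (k i) (l j) := by
    simp only [hP, map_sub, map_smul, map_sum, LinearMap.sum_apply, LinearMap.smul_apply,
      smul_eq_mul, mul_sub, sum_sub_distrib, mul_sum]
    congr 1
    exact sum_congr rfl fun i _ => sum_congr rfl fun j _ => by ring
  have hQl : ∑ i, bh i * B (Q i) (l i) =
      B q (∑ i, bh i • l i) + h * ∑ i, ∑ j, bh j * a j i * B (k i) (l j) := by
    simp only [hQ, map_add, map_smul, map_sum, LinearMap.add_apply, LinearMap.smul_apply,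
      LinearMap.sum_apply, smul_eq_mul, mul_add, sum_add_distrib, mul_sum]
    rw [sum_comm (γ := ι) (f := fun i j => h * (bh j * a j i * B (k i) (l j)))]
    congr 1
    exact sum_congr rfl fun i _ => sum_congr rfl fun j _ => by ring
  have hcross : ∑ i, ∑ j, b i * ah i j * B (k i) (l j) + ∑ i, ∑ j, bh j * a j i * B (k i) (l j)
      = ∑ i, ∑ j, b i * bh j * B (k i) (l j) := by
    simp only [← sum_add_distrib, ← add_mul, hcompat]
  rw [sum_sub_distrib, hkP, hQl]
  simp only [map_add, map_sub, map_smul, LinearMap.add_apply, LinearMap.smul_apply, smul_eq_mul,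
    hkl]
  linear_combination h ^ 2 * hcross

theorem canonicalForm_eq_dotProduct (d : ℕ) (x y : (Fin d → ℝ) × (Fin d → ℝ)) :
    canonicalForm d x y = x.1 ⬝ᵥ y.2 - y.1 ⬝ᵥ x.2 := by
  simp only [canonicalForm, dotProduct, sum_sub_distrib, mul_comm]

theorem canonicalForm_partitionedRK_step {d : ℕ} {ι : Type*} [Fintype ι] {a ah : ι → ι → ℝ}
    {b bh : ι → ℝ} (hcompat : ∀ i j, b i * ah i j + bh j * a j i = b i * bh j) (h : ℝ)
    {k l Q P : ι → (Fin d → ℝ) × (Fin d → ℝ) → Fin d → ℝ} {u v : (Fin d → ℝ) × (Fin d → ℝ)}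
    (hQ : ∀ i w, Q i w = w.1 + h • ∑ j, a i j • k j w)
    (hP : ∀ i w, P i w = w.2 - h • ∑ j, ah i j • l j w)
    (hkP : ∀ i, k i u ⬝ᵥ P i v = k i v ⬝ᵥ P i u) (hQl : ∀ i, Q i u ⬝ᵥ l i v = Q i v ⬝ᵥ l i u) :
    canonicalForm d (u.1 + h • ∑ i, b i • k i u, u.2 - h • ∑ i, bh i • l i u)
      (v.1 + h • ∑ i, b i • k i v, v.2 - h • ∑ i, bh i • l i v) = canonicalForm d u v := by
  have hstep (x y : (Fin d → ℝ) × (Fin d → ℝ)) :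
      (x.1 + h • ∑ i, b i • k i x) ⬝ᵥ (y.2 - h • ∑ i, bh i • l i y) =
        x.1 ⬝ᵥ y.2 + h * ∑ i, (b i * (k i x ⬝ᵥ P i y) - bh i * (Q i x ⬝ᵥ l i y)) :=
    (dotProductBilin ℝ ℝ).apply_partitionedRK_step hcompat h x.1 y.2 _ _ _ _ (hQ · x) (hP · y)
  rw [canonicalForm_eq_dotProduct, canonicalForm_eq_dotProduct, hstep, hstep]
  simp only [hkP, hQl]
  ring

theorem contDiffAt_gradVec {d : ℕ} {T : (Fin d → ℝ) → ℝ} {p : Fin d → ℝ} {n : WithTop ℕ∞}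
    (hT : ContDiffAt ℝ (n + 1) T p) : ContDiffAt ℝ n (gradVec d T) p :=
  contDiffAt_pi.2 fun _ => (hT.fderiv_right le_rfl).clm_apply contDiffAt_const

theorem ContDiffAt.differentiableAt_gradVec {d : ℕ} {T : (Fin d → ℝ) → ℝ} {p : Fin d → ℝ}
    (hT : ContDiffAt ℝ 2 T p) : DifferentiableAt ℝ (gradVec d T) p :=
  (contDiffAt_gradVec (n := 1) hT).differentiableAt one_ne_zero

theorem fderiv_gradVec_dotProduct {d : ℕ} {T : (Fin d → ℝ) → ℝ} {p : Fin d → ℝ}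
    (hT : DifferentiableAt ℝ (fderiv ℝ T) p) (x y : Fin d → ℝ) :
    fderiv ℝ (gradVec d T) p x ⬝ᵥ y = fderiv ℝ (fderiv ℝ T) p x y := by
  have hgrad : HasFDerivAt (gradVec d T) (ContinuousLinearMap.pi fun i =>
      (ContinuousLinearMap.apply ℝ ℝ (Pi.single i 1)).comp (fderiv ℝ (fderiv ℝ T) p)) p :=
    hasFDerivAt_pi.2 fun i =>
      (ContinuousLinearMap.apply ℝ ℝ (Pi.single i 1)).hasFDerivAt.comp (f := fderiv ℝ T) p
        hT.hasFDerivAt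
  conv_rhs => rw [pi_eq_sum_univ' y]
  simp [hgrad.fderiv, dotProduct, mul_comm]

theorem fderiv_gradVec_comp_dotProduct_comm {d : ℕ} {E : Type*} [NormedAddCommGroup E]
    [NormedSpace ℝ E] {T : (Fin d → ℝ) → ℝ} {g : E → Fin d → ℝ} {z : E}
    (hT : ContDiffAt ℝ 2 T (g z)) (hg : DifferentiableAt ℝ g z) (x y : E) :
    fderiv ℝ (fun z => gradVec d T (g z)) z x ⬝ᵥ fderiv ℝ g z y =
      fderiv ℝ (fun z => gradVec d T (g z)) z y ⬝ᵥ fderiv ℝ g z x := by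
  have hDT : DifferentiableAt ℝ (fderiv ℝ T) (g z) :=
    (hT.fderiv_right (m := 1) le_rfl).differentiableAt one_ne_zero
  rw [fderiv_fun_comp z hT.differentiableAt_gradVec hg]
  simp only [ContinuousLinearMap.comp_apply, fderiv_gradVec_dotProduct hDT]
  exact hT.isSymmSndFDerivAt (by simp) _ _

section
variable {𝕜 E F ι : Type*} [NontriviallyNormedField 𝕜] [NormedAddCommGroup E] [NormedSpace 𝕜 E]
  [NormedAddCommGroup F] [NormedSpace 𝕜 F] [Fintype ι] {f : E → F} {f' : E →L[𝕜] F}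
  {G : ι → E → F} {G' : ι → E →L[𝕜] F} {z : E}

theorem HasFDerivAt.add_smul_sum (hf : HasFDerivAt f f' z) (hG : ∀ j, HasFDerivAt (G j) (G' j) z)
    (h : 𝕜) (c : ι → 𝕜) :
    HasFDerivAt (fun z => f z + h • ∑ j, c j • G j z) (f' + h • ∑ j, c j • G' j) z :=
  hf.add (.const_smul (.fun_sum fun j _ => (hG j).const_smul (c j)) h)

theorem HasFDerivAt.sub_smul_sum (hf : HasFDerivAt f f' z) (hG : ∀ j, HasFDerivAt (G j) (G' j) z)
    (h : 𝕜) (c : ι → 𝕜) :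
    HasFDerivAt (fun z => f z - h • ∑ j, c j • G j z) (f' - h • ∑ j, c j • G' j) z :=
  hf.sub (.const_smul (.fun_sum fun j _ => (hG j).const_smul (c j)) h)

end

/-- **Symplecticity of partitioned Runge–Kutta methods.** Consider a partitioned RK method
with coefficients `(a, b)` and `(â, b̂)` applied to the separable canonical Hamiltonian system
`q̇ = ∇T(p)`, `ṗ = −∇V(q)` with `T, V` of class `C²`.  Suppose the compatibility condition
`bᵢ âᵢⱼ + b̂ⱼ aⱼᵢ = bᵢ b̂ⱼ` holds, and let `Q, P` be (differentiable) stage maps solving the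
stage equations (such maps exist for sufficiently small `h`).  Then the one-step map
`(q₀,p₀) ↦ (q₀ + h∑ᵢ bᵢ ∇T(Pᵢ), p₀ − h∑ᵢ b̂ᵢ ∇V(Qᵢ))` is symplectic. -/
theorem stmt_13 (d ns : ℕ) (T V : (Fin d → ℝ) → ℝ)
    (hT : ContDiff ℝ 2 T) (hV : ContDiff ℝ 2 V)
    (a ah : Fin ns → Fin ns → ℝ) (b bh : Fin ns → ℝ)
    (hcompat : ∀ i j, b i * ah i j + bh j * a j i = b i * bh j)
    (h : ℝ)
    (Q P : (Fin d → ℝ) × (Fin d → ℝ) → Fin ns → (Fin d → ℝ))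
    (hQ : ∀ z i, Q z i = z.1 + h • ∑ j, a i j • gradVec d T (P z j))
    (hP : ∀ z i, P z i = z.2 - h • ∑ j, ah i j • gradVec d V (Q z j))
    (hQd : ∀ i, Differentiable ℝ (fun z => Q z i))
    (hPd : ∀ i, Differentiable ℝ (fun z => P z i)) :
    let Φ : (Fin d → ℝ) × (Fin d → ℝ) → (Fin d → ℝ) × (Fin d → ℝ) := fun z =>
      (z.1 + h • ∑ i, b i • gradVec d T (P z i),
       z.2 - h • ∑ i, bh i • gradVec d V (Q z i))
    ∀ z u v, canonicalForm d (fderiv ℝ Φ z u) (fderiv ℝ Φ z v) = canonicalForm d u v := by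
  intro Φ z u v
  set K := fun i => fderiv ℝ (fun z => gradVec d T (P z i)) z
  set L := fun i => fderiv ℝ (fun z => gradVec d V (Q z i)) z
  have hK (i) : HasFDerivAt (fun z => gradVec d T (P z i)) (K i) z :=
    (hT.contDiffAt.differentiableAt_gradVec.comp z (hPd i z)).hasFDerivAt
  have hL (i) : HasFDerivAt (fun z => gradVec d V (Q z i)) (L i) z :=
    (hV.contDiffAt.differentiableAt_gradVec.comp z (hQd i z)).hasFDerivAt
  have hDΦ (w : (Fin d → ℝ) × (Fin d → ℝ)) :
      fderiv ℝ Φ z w = (w.1 + h • ∑ i, b i • K i w, w.2 - h • ∑ i, bh i • L i w) := by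
    simp [Φ, ((hasFDerivAt_fst.add_smul_sum hK h b).prodMk
      (hasFDerivAt_snd.sub_smul_sum hL h bh)).fderiv]
  rw [hDΦ, hDΦ]
  refine canonicalForm_partitionedRK_step hcompat h (Q := fun i => fderiv ℝ (Q · i) z)
    (P := fun i => fderiv ℝ (P · i) z) (fun i w => ?_) (fun i w => ?_) (fun i => ?_) (fun i => ?_)
  · simp [funext (hQ · i), (hasFDerivAt_fst.add_smul_sum hK h (a i)).fderiv]
  · simp [funext (hP · i), (hasFDerivAt_snd.sub_smul_sum hL h (ah i)).fderiv]
  · exact fderiv_gradVec_comp_dotProduct_comm hT.contDiffAt (hPd i z) u v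
  · rw [dotProduct_comm, fderiv_gradVec_comp_dotProduct_comm hV.contDiffAt (hQd i z) v u,
      dotProduct_comm]
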